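/- Let n ≥ 1, r ≥ 2 with r < 2n/(n−2) if n ≥ 3, δ(r) = n(1/2 − 1/r), and c_r the Gagliardo–Nirenberg constant. Then for every f ∈ Σ, every ω > 0 and every t ≠ 0, ‖f‖_{L^r} ≤ c_r (ω/sinh(ωt))^{δ(r)} ‖f‖_{L^2}^{1−δ(r)} ‖H(t)f‖_{L^2}^{δ(r)}, where H(t)f = x cosh(ωt) f + i(sinh(ωt)/ω)∇f. -/

import Mathlib

open MeasureTheory Complex

/-- The gradient of `f`, as an `EuclideanSpace ℂ (Fin n)`-valued function. -/
noncomputable def gradC (n : ℕ) (f : EuclideanSpace ℝ (Fin n) → ℂ)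
    (x : EuclideanSpace ℝ (Fin n)) : EuclideanSpace ℂ (Fin n) :=
  WithLp.toLp 2 fun j => fderiv ℝ f x (EuclideanSpace.single j 1)

/-- `H(t)f = x cosh(ωt) f + i (sinh(ωt)/ω) ∇f`, as an
`EuclideanSpace ℂ (Fin n)`-valued function. -/
noncomputable def HopV (n : ℕ) (ω t : ℝ) (f : EuclideanSpace ℝ (Fin n) → ℂ)
    (x : EuclideanSpace ℝ (Fin n)) : EuclideanSpace ℂ (Fin n) :=
  WithLp.toLp 2 fun j => (Real.cosh (ω * t) * x j : ℝ) * f x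
    + I * (Real.sinh (ω * t) / ω : ℝ) * fderiv ℝ f x (EuclideanSpace.single j 1)

section Aux
variable {n : ℕ} {f : EuclideanSpace ℝ (Fin n) → ℂ}

/-- The quadratic phase `e^{-i a ‖x‖²/2}`. -/
noncomputable def phMGN (a : ℝ) (x : EuclideanSpace ℝ (Fin n)) : ℂ :=
  Complex.exp (((-(a/2) * @inner ℝ _ _ x x : ℝ) : ℂ) * I)

/-- `x f`, as an `EuclideanSpace ℂ (Fin n)`-valued function. -/
noncomputable def xMulMGN (f : EuclideanSpace ℝ (Fin n) → ℂ)
    (x : EuclideanSpace ℝ (Fin n)) : EuclideanSpace ℂ (Fin n) :=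
  WithLp.toLp 2 fun j => (x j : ℂ) * f x

lemma phMGN_abs (a : ℝ) (x : EuclideanSpace ℝ (Fin n)) : ‖phMGN a x‖ = 1 :=
  Complex.norm_exp_ofReal_mul_I _

lemma phMGN_ne_zero (a : ℝ) (x : EuclideanSpace ℝ (Fin n)) : phMGN a x ≠ 0 :=
  Complex.exp_ne_zero _

lemma norm_phMGN_mul (a : ℝ) (x : EuclideanSpace ℝ (Fin n)) (z : ℂ) :
    ‖phMGN a x * z‖ = ‖z‖ := by
  rw [norm_mul]
  simp [phMGN_abs]

lemma continuous_phMGN (a : ℝ) : Continuous (phMGN (n := n) a) := by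
  unfold phMGN
  exact Complex.continuous_exp.comp ((Complex.continuous_ofReal.comp
    (continuous_const.mul (continuous_id.inner continuous_id))).mul continuous_const)

lemma hasFDerivAt_ph_mul (hf : Differentiable ℝ f) (a : ℝ) (x : EuclideanSpace ℝ (Fin n)) :
    ∃ L : EuclideanSpace ℝ (Fin n) →L[ℝ] ℂ,
      HasFDerivAt (fun y => phMGN a y * f y) L x ∧
      ∀ j : Fin n, L (EuclideanSpace.single j 1)
        = phMGN a x * (fderiv ℝ f x (EuclideanSpace.single j 1) - I * a * x j * f x) := by
  have hq : HasFDerivAt (fun y : EuclideanSpace ℝ (Fin n) => (@inner ℝ _ _ y y : ℝ))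
      ((fderivInnerCLM ℝ (x, x)).comp
        ((ContinuousLinearMap.id ℝ _).prod (ContinuousLinearMap.id ℝ _))) x :=
    (hasFDerivAt_id x).inner ℝ (hasFDerivAt_id x)
  have h4 := ((Complex.ofRealCLM.hasFDerivAt.comp x (hq.const_mul (-(a/2)))).mul_const I).cexp
  refine ⟨_, h4.mul (hf x).hasFDerivAt, fun j => ?_⟩
  show phMGN a x • fderiv ℝ f x (EuclideanSpace.single j 1)
      + f x • (phMGN a x • (I • (Complex.ofRealCLM.comp _) (EuclideanSpace.single j 1))) = _
  simp [phMGN, EuclideanSpace.inner_single_right, real_inner_comm, smul_eq_mul,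
    Function.comp]
  ring

lemma diff_ph_mul (hf : Differentiable ℝ f) (a : ℝ) :
    Differentiable ℝ (fun y => phMGN a y * f y) := fun x =>
  ((hasFDerivAt_ph_mul hf a x).choose_spec.1).differentiableAt

lemma grad_ph_mul (hf : Differentiable ℝ f) (a : ℝ) (x : EuclideanSpace ℝ (Fin n)) (j : Fin n) :
    gradC n (fun y => phMGN a y * f y) x j
      = phMGN a x * (fderiv ℝ f x (EuclideanSpace.single j 1) - I * a * x j * f x) := by
  obtain ⟨L, hL, hLj⟩ := hasFDerivAt_ph_mul hf a x
  rw [gradC, hL.fderiv]; exact hLj j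

lemma norm_xMulMGN (x : EuclideanSpace ℝ (Fin n)) :
    ‖xMulMGN f x‖ = ‖x‖ * ‖f x‖ := by
  rw [show ‖xMulMGN f x‖ = _ from EuclideanSpace.norm_eq _, EuclideanSpace.norm_eq,
    ← Real.sqrt_sq (norm_nonneg (f x)), ← Real.sqrt_mul (by positivity)]
  congr 1
  simp [xMulMGN, mul_pow, Finset.sum_mul]

end Aux

set_option maxHeartbeats 1000000 in
/-- Modified Gagliardo–Nirenberg inequality (2.7), second line: for `f ∈ Σ`,
`ω > 0` and `t ≠ 0`,
`‖f‖_{L^r} ≤ c_r (ω/|sinh(ωt)|)^{δ(r)} ‖f‖_{L²}^{1-δ(r)} ‖H(t)f‖_{L²}^{δ(r)}`. -/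
theorem modified_GN_H (n : ℕ) (hn : 1 ≤ n) (r : ℝ) (hr : 2 ≤ r)
    (hrn : 3 ≤ n → r < 2 * n / ((n : ℝ) - 2))
    (δ : ℝ) (hδ : δ = (n : ℝ) * (1/2 - 1/r)) (c : ℝ) (hc : 0 < c)
    (hGN : ∀ g : EuclideanSpace ℝ (Fin n) → ℂ, Differentiable ℝ g →
        MemLp g 2 volume → MemLp (gradC n g) 2 volume →
        (eLpNorm g (ENNReal.ofReal r) volume).toReal
          ≤ c * (eLpNorm g 2 volume).toReal ^ (1 - δ)
              * (eLpNorm (gradC n g) 2 volume).toReal ^ δ)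
    (ω t : ℝ) (hω : 0 < ω) (ht : t ≠ 0)
    (f : EuclideanSpace ℝ (Fin n) → ℂ) (hf : Differentiable ℝ f)
    (hf2 : MemLp f 2 volume)
    (hfgrad : MemLp (gradC n f) 2 volume)
    (hfx : MemLp (fun x : EuclideanSpace ℝ (Fin n) => ‖x‖ * ‖f x‖) 2 volume) :
    (eLpNorm f (ENNReal.ofReal r) volume).toReal
      ≤ c * (ω / |Real.sinh (ω * t)|) ^ δ * (eLpNorm f 2 volume).toReal ^ (1 - δ)
          * (eLpNorm (HopV n ω t f) 2 volume).toReal ^ δ := by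
  set s : ℝ := Real.sinh (ω * t) with hs
  have hs0 : s ≠ 0 := by
    rw [hs, Ne, Real.sinh_eq_zero]
    exact mul_ne_zero hω.ne' ht
  have hω0 : ω ≠ 0 := hω.ne'
  set a : ℝ := ω * Real.cosh (ω * t) / s with ha
  set zc : ℂ := I * ((s / ω : ℝ) : ℂ) with hzc
  have hzc0 : zc ≠ 0 := by
    exact mul_ne_zero I_ne_zero (Complex.ofReal_ne_zero.mpr (div_ne_zero hs0 hω0))
  have hb : (s / ω) * a = Real.cosh (ω * t) := by
    rw [ha]; field_simp
  set g : EuclideanSpace ℝ (Fin n) → ℂ := fun y => phMGN a y * f y with hg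
  -- pointwise identity: HopV f = (zc * (phMGN a x)⁻¹) • gradC g
  have hkey : ∀ x, HopV n ω t f x = (zc * (phMGN a x)⁻¹) • gradC n g x := by
    intro x
    ext j
    show HopV n ω t f x j = (zc * (phMGN a x)⁻¹) * gradC n g x j
    rw [grad_ph_mul hf a x j]
    rw [show (zc * (phMGN a x)⁻¹) * (phMGN a x *
        (fderiv ℝ f x (EuclideanSpace.single j 1) - I * a * x j * f x))
      = zc * (fderiv ℝ f x (EuclideanSpace.single j 1) - I * a * x j * f x) by
        field_simp [phMGN_ne_zero]]
    have hbC : (s : ℂ) / (ω : ℂ) * (a : ℂ) = Complex.cosh ((ω : ℂ) * (t : ℂ)) := by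
      have h := congrArg Complex.ofReal hb
      push_cast at h
      exact h
    show ((Real.cosh (ω * t) * x j : ℝ) : ℂ) * f x
        + I * ((s / ω : ℝ) : ℂ) * fderiv ℝ f x (EuclideanSpace.single j 1) = _
    rw [hzc]
    push_cast
    linear_combination (-((x j : ℂ) * f x)) * hbC + ((s:ℂ)/(ω:ℂ) * (a:ℂ) * (x j : ℂ) * f x) * Complex.I_sq
  -- norms
  have hnorm_g : ∀ x, ‖g x‖ = ‖f x‖ := fun x => norm_phMGN_mul a x (f x)
  have hnorm_key : ∀ x, ‖gradC n g x‖ = (ω / |s|) * ‖HopV n ω t f x‖ := by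
    intro x
    rw [hkey x, norm_smul]
    rw [show ‖zc * (phMGN a x)⁻¹‖ = |s| / ω by
      rw [norm_mul, norm_inv]
      simp [hzc, phMGN_abs, abs_div, abs_of_pos hω]]
    rw [← mul_assoc]
    rw [show (ω / |s|) * (|s| / ω) = 1 by field_simp]
    ring
  -- MemLp of HopV
  have hXcont : Continuous (xMulMGN f) := by
    refine (PiLp.continuous_toLp 2 _).comp (continuous_pi fun j => ?_)
    exact (Complex.continuous_ofReal.comp ((continuous_apply j).comp (PiLp.continuous_ofLp 2 _))).mul
      hf.continuous
  have hX : MemLp (xMulMGN f) 2 volume := by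
    refine MemLp.of_le hfx hXcont.aestronglyMeasurable (Filter.Eventually.of_forall fun x => ?_)
    rw [norm_xMulMGN]
    exact le_abs_self _
  have hHopV_eq : HopV n ω t f
      = fun x => Real.cosh (ω * t) • xMulMGN f x + zc • gradC n f x := by
    funext x; ext j
    show ((Real.cosh (ω * t) * x j : ℝ) : ℂ) * f x
        + I * ((s / ω : ℝ) : ℂ) * fderiv ℝ f x (EuclideanSpace.single j 1)
      = Real.cosh (ω * t) • ((x j : ℂ) * f x) + zc * fderiv ℝ f x (EuclideanSpace.single j 1)
    rw [hzc, real_smul]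
    push_cast
    ring
  have hHop : MemLp (HopV n ω t f) 2 volume := by
    rw [hHopV_eq]
    exact (hX.const_smul (Real.cosh (ω * t))).add (hfgrad.const_smul zc)
  -- MemLp of g and gradC g
  have hg2norm : eLpNorm g 2 volume = eLpNorm f 2 volume :=
    eLpNorm_congr_norm_ae (Filter.Eventually.of_forall fun x => by rw [hnorm_g x])
  have hgrnorm : eLpNorm g (ENNReal.ofReal r) volume = eLpNorm f (ENNReal.ofReal r) volume :=
    eLpNorm_congr_norm_ae (Filter.Eventually.of_forall fun x => by rw [hnorm_g x])
  have hmemg : MemLp g 2 volume :=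
    ⟨((continuous_phMGN a).mul hf.continuous).aestronglyMeasurable,
      by rw [hg2norm]; exact hf2.2⟩
  have hgrad_eLp : eLpNorm (gradC n g) 2 volume
      = eLpNorm (fun x => (ω / |s|) • HopV n ω t f x) 2 volume := by
    refine eLpNorm_congr_norm_ae (Filter.Eventually.of_forall fun x => ?_)
    rw [hnorm_key x, norm_smul, Real.norm_eq_abs, abs_of_pos (by positivity : (0:ℝ) < ω / |s|)]
  have hgradg_meas : AEStronglyMeasurable (gradC n g) volume := by
    have : gradC n g = fun x => ((phMGN a x) * zc⁻¹) • HopV n ω t f x := by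
      funext x
      rw [hkey x, smul_smul]
      rw [show phMGN a x * zc⁻¹ * (zc * (phMGN a x)⁻¹) = 1 by
        field_simp [phMGN_ne_zero]]
      rw [one_smul]
    rw [this]
    exact (((continuous_phMGN a).mul continuous_const).aestronglyMeasurable).smul hHop.1
  have hmemgrad : MemLp (gradC n g) 2 volume := by
    refine ⟨hgradg_meas, ?_⟩
    rw [hgrad_eLp]
    exact (hHop.const_smul (ω / |s|)).2
  -- apply GN to g
  have hGNg := hGN g (diff_ph_mul hf a) hmemg hmemgrad
  rw [hgrnorm, hg2norm] at hGNg
  have hsmul : eLpNorm (fun x => (ω / |s|) • HopV n ω t f x) 2 volume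
      = (‖(ω / |s| : ℝ)‖₊ : ENNReal) * eLpNorm (HopV n ω t f) 2 volume :=
    by have h := eLpNorm_const_smul (ω / |s|) (HopV n ω t f) 2 volume; exact h
  have htos : (eLpNorm (gradC n g) 2 volume).toReal
      = (ω / |s|) * (eLpNorm (HopV n ω t f) 2 volume).toReal := by
    rw [hgrad_eLp, hsmul, ENNReal.toReal_mul]
    congr 1
    simp [Real.norm_eq_abs, abs_div, abs_of_pos hω]
  rw [htos] at hGNg
  refine hGNg.trans (le_of_eq ?_)
  rw [Real.mul_rpow (by positivity) ENNReal.toReal_nonneg]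
  ring
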